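/- Let F be a free group of rank greater than 1, and let v, w be nontrivial elements of F such that the cyclic subgroups ⟨v⟩ and ⟨w⟩ intersect trivially. Then for all nonzero integers m, k, n, we have v^m w^k v^{-m} ≠ w^n. -/

import Mathlib

/-!
The subgroup `H` of `F` generated by `v ^ m` and `w` is free (Nielsen–Schreier). If
`v^m w^k v^-m = w^n` with `k ≠ n`, then `w` has finite order in the abelianization of `H`,
which is torsion-free, so that abelianization is cyclic and `H` cannot map onto `ℤ²`; if `k = n`,
then `v ^ m` and `w ^ k` commute and generate an abelian free group. In both cases the free group
has at most one generator, so `v ^ m` and `w ^ k` lie in a common cyclic subgroup. Since `F` is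
torsion-free, they then have a common nontrivial power, which lies in `⟨v⟩ ∩ ⟨w⟩`.
-/

open Subgroup

theorem Subgroup.map_closure_pair_le_zpowers_of_conj_zpow {G A : Type*} [Group G] [CommGroup A]
    [IsMulTorsionFree A] (f : G →* A) {x y : G} {k n : ℤ} (h : x * y ^ k * x⁻¹ = y ^ n)
    (hkn : k ≠ n) : (closure {x, y}).map f ≤ zpowers (f x) := by
  have hy : f y = 1 := by
    have hfy : f y ^ k = f y ^ n := by
      simpa [mul_comm (f x)] using congrArg f h
    rw [← IsMulTorsionFree.zpow_eq_one_iff_left (sub_ne_zero.2 hkn), zpow_sub, hfy,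
      mul_inv_cancel]
  rw [MonoidHom.map_closure, Set.image_pair, hy, closure_le]
  rintro _ (rfl | rfl)
  · exact mem_zpowers _
  · exact one_mem _

theorem Subgroup.zpowers_inf_zpowers_ne_bot {G : Type*} [Group G] [IsMulTorsionFree G]
    {H : Subgroup G} [IsCyclic H] {a b : G} (ha : a ∈ H) (hb : b ∈ H) (ha1 : a ≠ 1)
    (hb1 : b ≠ 1) : zpowers a ⊓ zpowers b ≠ ⊥ := by
  obtain ⟨c, hc⟩ := IsCyclic.exists_generator (α := H)
  obtain ⟨i, hi⟩ := mem_zpowers_iff.1 (hc ⟨a, ha⟩)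
  obtain ⟨j, hj⟩ := mem_zpowers_iff.1 (hc ⟨b, hb⟩)
  replace hi : (c : G) ^ i = a := by simpa using congrArg Subtype.val hi
  replace hj : (c : G) ^ j = b := by simpa using congrArg Subtype.val hj
  have hi0 : i ≠ 0 := by rintro rfl; exact ha1 (by simp [← hi])
  have hj0 : j ≠ 0 := by rintro rfl; exact hb1 (by simp [← hj])
  have hab : a ^ j = b ^ i := by rw [← hi, ← hj, ← zpow_mul, ← zpow_mul, mul_comm]
  rw [Ne, eq_bot_iff_forall]
  push Not
  refine ⟨a ^ j, ⟨zpow_mem_zpowers a j, hab ▸ zpow_mem_zpowers b i⟩, ?_⟩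
  rwa [Ne, IsMulTorsionFree.zpow_eq_one_iff_left hj0]

namespace FreeGroup

variable {α : Type*}

theorem not_commute_of_ne {a b : α} (h : a ≠ b) : ¬Commute (of a) (of b) := fun hc ↦ by
  classical
  have := congrArg toWord hc.eq
  simp [toWord_mul] at this
  exact h this.1

instance isCyclic_of_subsingleton [Subsingleton α] : IsCyclic (FreeGroup α) := by
  cases isEmpty_or_nonempty α with
  | inl _ => infer_instance
  | inr _ =>
    have := uniqueOfSubsingleton (Classical.arbitrary α)
    infer_instance

theorem exists_surjective_prod_int_of_ne {a b : α} (h : a ≠ b) :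
    ∃ f : FreeGroup α →* Multiplicative ℤ × Multiplicative ℤ, Function.Surjective f := by
  classical
  refine ⟨lift fun c ↦ (if c = a then .ofAdd 1 else 1, if c = b then .ofAdd 1 else 1), ?_⟩
  rintro ⟨p, q⟩
  refine ⟨of a ^ p.toAdd * of b ^ q.toAdd, ?_⟩
  simp [h, h.symm, ← ofAdd_zsmul]

end FreeGroup

namespace IsFreeGroup

variable {G : Type*} [Group G] [IsFreeGroup G]

theorem isCyclic_of_subsingleton_generators [Subsingleton (Generators G)] : IsCyclic G :=
  isCyclic_of_surjective (toFreeGroup G).symm (toFreeGroup G).symm.surjective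

theorem isCyclic_of_isMulCommutative [IsMulCommutative G] : IsCyclic G := by
  suffices Subsingleton (Generators G) from isCyclic_of_subsingleton_generators
  refine ⟨fun a b ↦ by_contra fun hab ↦ FreeGroup.not_commute_of_ne hab ?_⟩
  have hcomm : Commute ((toFreeGroup G).symm (.of a)) ((toFreeGroup G).symm (.of b)) :=
    mul_comm' _ _
  simpa using hcomm.map (toFreeGroup G)

theorem isCyclic_of_conj_zpow {x y : G} {k n : ℤ} (hgen : closure {x, y} = ⊤)
    (h : x * y ^ k * x⁻¹ = y ^ n) (hkn : k ≠ n) : IsCyclic G := by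
  by_contra hG
  obtain ⟨a, b, hab⟩ : Nontrivial (Generators G) := by
    rw [← not_subsingleton_iff_nontrivial]
    exact fun _ ↦ hG isCyclic_of_subsingleton_generators
  obtain ⟨f, hf⟩ := FreeGroup.exists_surjective_prod_int_of_ne hab
  have hrange :=
    map_closure_pair_le_zpowers_of_conj_zpow (f.comp (toFreeGroup G).toMonoidHom) h hkn
  rw [hgen, ← MonoidHom.range_eq_map] at hrange
  refine not_isCyclic_prod_of_infinite_nontrivial (Multiplicative ℤ) (Multiplicative ℤ)
    ⟨_, fun z ↦ hrange ?_⟩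
  obtain ⟨u, rfl⟩ := hf z
  exact ⟨(toFreeGroup G).symm u, by simp⟩

theorem isCyclic_closure_pair_of_commute {x y : G} (h : Commute x y) :
    IsCyclic (closure {x, y}) := by
  have := isMulCommutative_closure (k := {x, y}) (by
    rintro _ (rfl | rfl) _ (rfl | rfl) <;> first | rfl | exact h.eq | exact h.symm.eq)
  exact isCyclic_of_isMulCommutative

theorem isCyclic_closure_pair_of_conj_zpow {x y : G} {k n : ℤ} (h : x * y ^ k * x⁻¹ = y ^ n)
    (hkn : k ≠ n) : IsCyclic (closure {x, y}) := by
  refine isCyclic_of_conj_zpow (x := ⟨x, subset_closure (by simp)⟩)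
    (y := ⟨y, subset_closure (by simp)⟩) ?_ (Subtype.ext h) hkn
  convert closure_closure_coe_preimage (k := {x, y}) using 2
  ext
  simp [Subtype.ext_iff]

end IsFreeGroup

theorem stmt2_general (Y : Type) (v w : FreeGroup Y) (hv : v ≠ 1) (hw : w ≠ 1)
    (hdisj : Subgroup.zpowers v ⊓ Subgroup.zpowers w = ⊥) :
    ∀ m k n : ℤ, m ≠ 0 → k ≠ 0 → n ≠ 0 → v ^ m * w ^ k * v ^ (-m) ≠ w ^ n := by
  intro m k n hm hk _ heq
  rw [zpow_neg] at heq
  have hvm : v ^ m ≠ 1 := by rwa [Ne, IsMulTorsionFree.zpow_eq_one_iff_left hm]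
  have hwk : w ^ k ≠ 1 := by rwa [Ne, IsMulTorsionFree.zpow_eq_one_iff_left hk]
  obtain ⟨H, _, hvH, hwH⟩ : ∃ H : Subgroup (FreeGroup Y), IsCyclic H ∧ v ^ m ∈ H ∧ w ^ k ∈ H := by
    rcases eq_or_ne k n with rfl | hkn
    · exact ⟨_, IsFreeGroup.isCyclic_closure_pair_of_commute (mul_inv_eq_iff_eq_mul.1 heq),
        subset_closure (by simp), subset_closure (by simp)⟩
    · exact ⟨_, IsFreeGroup.isCyclic_closure_pair_of_conj_zpow heq hkn,
        subset_closure (by simp), zpow_mem (subset_closure (by simp)) k⟩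
  refine zpowers_inf_zpowers_ne_bot hvH hwH hvm hwk (eq_bot_iff.2 (le_trans ?_ hdisj.le))
  exact inf_le_inf (zpowers_le.2 (zpow_mem_zpowers v m)) (zpowers_le.2 (zpow_mem_zpowers w k))

/-- If v, w are nontrivial elements of a free group of rank > 1 with
⟨v⟩ ∩ ⟨w⟩ trivial, then v^m w^k v^{-m} ≠ w^n for all nonzero m, k, n. -/
theorem stmt2 (Y : Type) [Nontrivial Y] (v w : FreeGroup Y) (hv : v ≠ 1) (hw : w ≠ 1)
    (hdisj : Subgroup.zpowers v ⊓ Subgroup.zpowers w = ⊥) :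
    ∀ m k n : ℤ, m ≠ 0 → k ≠ 0 → n ≠ 0 → v ^ m * w ^ k * v ^ (-m) ≠ w ^ n :=
  stmt2_general Y v w hv hw hdisj
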